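/- arXiv:1104.2744 — 6 statements merged into one kernel-verified Lean document; each statement's English description precedes it below -/
import Mathlib

section
/- For a deterministic set of rules R on a set X (all conclusions b are singletons), if the class of closed subsets of every set of rules is set-generated (NID), then there is a least R-closed subset of X; in particular, the intersection of any generating set for the R∪{(∅,{*})}-closed subsets of X∪{*}, with * removed, is the least R-closed subset of X. -/
def IsClosedUnder {X : Type*} (R : Set (Set X × Set X)) (Y : Set X) : Prop :=
  ∀ r ∈ R, r.1 ⊆ Y → (r.2 ∩ Y).Nonempty

def SetGenerated {X : Type*} (M : Set (Set X)) : Prop :=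
  ∃ G : Set (Set X), G ⊆ M ∧ ∀ α ∈ M, ∀ x ∈ α, ∃ β ∈ G, x ∈ β ∧ β ⊆ α

/-- The extension of a set of rules `R` on `X` to `X ∪ {*}` (here `Option X`, with
`* = none`), together with the extra rule `(∅, {*})`. -/
def extendedRules {X : Type*} (R : Set (Set X × Set X)) :
    Set (Set (Option X) × Set (Option X)) :=
  {r | ∃ s ∈ R, r = (Option.some '' s.1, Option.some '' s.2)} ∪
  {((∅ : Set (Option X)), {(none : Option X)})}

/-!
Embed `X` in `X ∪ {*}` and add the rule `(∅, {*})`, so that every extended-closed set contains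
`*` and is the image of an `R`-closed set with `*` added. For a generating family `G`, each
`R`-closed `Y` gives the extended-closed set `{*} ∪ Y`, which contains some member of `G`
through `*`; hence `⋂ G` restricted to `X` lies inside `Y`. Being an intersection of
`R`-closed sets and `R` deterministic, it is itself `R`-closed.
-/

variable {X : Type*} {R : Set (Set X × Set X)}

theorem isClosedUnder_extendedRules_iff {Z : Set (Option X)} :
    IsClosedUnder (extendedRules R) Z ↔ none ∈ Z ∧ IsClosedUnder R (some ⁻¹' Z) := by
  constructor
  · intro h
    refine ⟨?_, fun r hr hsub => ?_⟩
    · obtain ⟨_, rfl, hZ⟩ := h _ (Or.inr rfl) (Set.empty_subset _)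
      exact hZ
    · obtain ⟨_, ⟨y, hy, rfl⟩, hyZ⟩ :=
        h _ (Or.inl ⟨r, hr, rfl⟩) (Set.image_subset_iff.2 hsub)
      exact ⟨y, hy, hyZ⟩
  · rintro ⟨hnone, hR⟩ r (⟨s, hs, rfl⟩ | rfl) hsub
    · obtain ⟨y, hy, hyZ⟩ := hR s hs (Set.image_subset_iff.1 hsub)
      exact ⟨some y, Set.mem_image_of_mem _ hy, hyZ⟩
    · exact ⟨none, rfl, hnone⟩

theorem isClosedUnder_iInter (hdet : ∀ r ∈ R, ∃ x, r.2 = {x}) {ι : Sort*} {Y : ι → Set X}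
    (hY : ∀ i, IsClosedUnder R (Y i)) : IsClosedUnder R (⋂ i, Y i) := by
  intro r hr hsub
  obtain ⟨x, hx⟩ := hdet r hr
  refine ⟨x, by simp [hx], Set.mem_iInter.2 fun i => ?_⟩
  obtain ⟨y, hy, hyY⟩ := hY i r hr (hsub.trans (Set.iInter_subset _ i))
  rw [hx, Set.mem_singleton_iff] at hy
  exact hy ▸ hyY

theorem sInter_subset_of_generating {Y : Type*} {M G : Set (Set Y)}
    (hgen : ∀ α ∈ M, ∀ x ∈ α, ∃ β ∈ G, x ∈ β ∧ β ⊆ α) {α : Set Y} (hα : α ∈ M) {x : Y}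
    (hx : x ∈ α) : ⋂₀ G ⊆ α := by
  obtain ⟨β, hβG, -, hβα⟩ := hgen α hα x hx
  exact (Set.sInter_subset_of_mem hβG).trans hβα

theorem isClosedUnder_preimage_some_sInter (hdet : ∀ r ∈ R, ∃ x, r.2 = {x})
    {G : Set (Set (Option X))} (hG : ∀ g ∈ G, IsClosedUnder (extendedRules R) g) :
    IsClosedUnder R (some ⁻¹' ⋂₀ G) := by
  rw [Set.preimage_sInter]
  exact isClosedUnder_iInter hdet fun g => isClosedUnder_iInter hdet fun hg =>
    (isClosedUnder_extendedRules_iff.1 (hG g hg)).2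

theorem preimage_some_sInter_subset {G : Set (Set (Option X))}
    (hgen : ∀ α : Set (Option X), IsClosedUnder (extendedRules R) α →
      ∀ x ∈ α, ∃ β ∈ G, x ∈ β ∧ β ⊆ α)
    {Y : Set X} (hY : IsClosedUnder R Y) : some ⁻¹' ⋂₀ G ⊆ Y := by
  have hpre : some ⁻¹' insert none (some '' Y) = Y := by ext; simp
  have hclosed : IsClosedUnder (extendedRules R) (insert none (some '' Y)) :=
    isClosedUnder_extendedRules_iff.2 ⟨Set.mem_insert _ _, by rwa [hpre]⟩
  rw [← hpre]
  exact Set.preimage_mono (sInter_subset_of_generating hgen hclosed (Set.mem_insert _ _))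

/-- for a deterministic set of rules `R` on `X`, NID implies there is a
least `R`-closed subset of `X`; in particular, for any generating set `G` for the
`R ∪ {(∅,{*})}`-closed subsets of `X ∪ {*}`, the intersection `⋂ G` with `*` removed
is the least `R`-closed subset of `X`. -/
theorem NID_implies_least_closed (X : Type) (R : Set (Set X × Set X))
    (hdet : ∀ r ∈ R, ∃ x : X, r.2 = {x})
    (hNID : ∀ (Y : Type) (S : Set (Set Y × Set Y)),
      SetGenerated {Z : Set Y | IsClosedUnder S Z}) :
    (∃ L : Set X, IsClosedUnder R L ∧ ∀ Y : Set X, IsClosedUnder R Y → L ⊆ Y) ∧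
    (∀ G : Set (Set (Option X)),
      (G ⊆ {Z : Set (Option X) | IsClosedUnder (extendedRules R) Z}) →
      (∀ α : Set (Option X), IsClosedUnder (extendedRules R) α →
        ∀ x ∈ α, ∃ β ∈ G, x ∈ β ∧ β ⊆ α) →
      (IsClosedUnder R {x : X | ∀ g ∈ G, Option.some x ∈ g} ∧
        ∀ Y : Set X, IsClosedUnder R Y →
          {x : X | ∀ g ∈ G, Option.some x ∈ g} ⊆ Y)) := by
  have least (G : Set (Set (Option X)))
      (hG : G ⊆ {Z : Set (Option X) | IsClosedUnder (extendedRules R) Z})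
      (hgen : ∀ α : Set (Option X), IsClosedUnder (extendedRules R) α →
        ∀ x ∈ α, ∃ β ∈ G, x ∈ β ∧ β ⊆ α) :
      IsClosedUnder R (some ⁻¹' ⋂₀ G) ∧ ∀ Y : Set X, IsClosedUnder R Y → some ⁻¹' ⋂₀ G ⊆ Y :=
    ⟨isClosedUnder_preimage_some_sInter hdet hG, fun _ => preimage_some_sInter_subset hgen⟩
  obtain ⟨G, hG, hgen⟩ := hNID (Option X) (extendedRules R)
  exact ⟨⟨_, least G hG hgen⟩, least⟩
end

section
/- Let f : B → A be a function and let P_f be the associated polynomial functor. The set M of all subsets m of the set P of odd-length paths ⟨a₀,b₀,…,aₙ⟩ (with aᵢ ∈ A, bᵢ ∈ B, f(bᵢ)=aᵢ) satisfying: (1) there is a unique a ∈ A with ⟨a⟩ ∈ m; (2) for every σ = ⟨a₀,b₀,…,aₙ⟩ ∈ m and every b ∈ f⁻¹(aₙ) there is a unique a with σ*⟨b,a⟩ ∈ m; (3) m is closed under initial segments — carries a canonical P_f-coalgebra structure and is the final P_f-coalgebra (the M-type of f). -/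
/-!
A coalgebra `v : X → P_f X` unfolds each state `x` into the tree of its possible runs: the
path `⟨a₀,b₀,…,aₙ⟩` belongs to it when `a₀` is the label of `x`, `b₀` is a direction at `a₀`,
and the rest is a run of the state reached along `b₀`. This unfolding is a morphism into
`MTy f`, and it is invariant under coalgebra morphisms. Unfolding `MTy f` itself along its
own structure map gives back each tree, so any morphism `h : X → MTy f` sends `x` to the
unfolding of `h x`, which is the unfolding of `x`.
-/

/-- A path `⟨a₀,b₀,a₁,b₁,…,aₙ⟩` is represented as a list of pairs `(aᵢ,bᵢ)` (for `i < n`)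
together with the final element `aₙ`. `IsMTree f m` says that `m` is a set of valid paths
(i.e. `f bᵢ = aᵢ` throughout) such that: (1) there is a unique `a` with `⟨a⟩ ∈ m`;
(2) for every `σ = ⟨a₀,b₀,…,aₙ⟩ ∈ m` and every `b ∈ f⁻¹(aₙ)` there is a unique `a`
with `σ*⟨b,a⟩ ∈ m`; (3) `m` is closed under initial segments. -/
def IsMTree {A B : Type*} (f : B → A) (m : Set (List (A × B) × A)) : Prop :=
  (∀ p ∈ m, ∀ q ∈ p.1, f q.2 = q.1) ∧
  (∃! a : A, (([] : List (A × B)), a) ∈ m) ∧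
  (∀ l (an : A), (l, an) ∈ m → ∀ b : B, f b = an →
    ∃! a : A, (l ++ [(an, b)], a) ∈ m) ∧
  (∀ (l₁ : List (A × B)) (a' : A) (b' : B) (l₂ : List (A × B)) (a : A),
    (l₁ ++ (a', b') :: l₂, a) ∈ m → (l₁, a') ∈ m)

/-- The candidate M-type: the set of all `m` satisfying `IsMTree f`. -/
def MTy {A B : Type*} (f : B → A) : Type _ := {m : Set (List (A × B) × A) // IsMTree f m}

variable {A B : Type*} {f : B → A}

theorem IsMTree.subtree {m : Set (List (A × B) × A)} (hm : IsMTree f m)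
    {a : A} (ha : ([], a) ∈ m) {b : B} (hb : f b = a) :
    IsMTree f {σ | ((a, b) :: σ.1, σ.2) ∈ m} := by
  obtain ⟨hval, -, hsucc, hclosed⟩ := hm
  refine ⟨fun p hp q hq => hval _ hp q (List.mem_cons_of_mem _ hq), ?_, ?_, ?_⟩
  · simpa using hsucc [] a ha b hb
  · intro l an hl b' hb'
    simpa using hsucc ((a, b) :: l) an hl b' hb'
  · intro l₁ a' b' l₂ a'' hmem
    exact hclosed ((a, b) :: l₁) a' b' l₂ a'' hmem

theorem Sigma.mk_eq_mk_of_subtype_fun {M : Type*} {a a' : A} (ha : a = a')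
    {g : {b : B // f b = a} → M} {g' : {b : B // f b = a'} → M}
    (hg : ∀ (b : B) (hb : f b = a), g ⟨b, hb⟩ = g' ⟨b, hb.trans ha⟩) :
    (⟨a, g⟩ : Σ a : A, ({b : B // f b = a} → M)) = ⟨a', g'⟩ := by
  subst ha
  obtain rfl : g = g' := funext fun ⟨b, hb⟩ => hg b hb
  rfl

namespace MTy

noncomputable def root (m : MTy f) : A := m.2.2.1.choose

theorem root_mem (m : MTy f) : ([], m.root) ∈ m.val := m.2.2.1.choose_spec.1

theorem eq_root_of_mem {m : MTy f} {a : A} (ha : ([], a) ∈ m.val) : a = m.root :=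
  m.2.2.1.unique ha m.root_mem

noncomputable def child (m : MTy f) (b : {b : B // f b = m.root}) : MTy f :=
  ⟨{σ | ((m.root, b.1) :: σ.1, σ.2) ∈ m.val}, m.2.subtree m.root_mem b.2⟩

noncomputable def dest (m : MTy f) : Σ a : A, ({b : B // f b = a} → MTy f) :=
  ⟨m.root, m.child⟩

theorem mem_cons_iff (m : MTy f) (a₀ : A) (b₀ : B) (l : List (A × B)) (a : A) :
    ((a₀, b₀) :: l, a) ∈ m.val ↔
      ∃ hb : f b₀ = m.root, a₀ = m.root ∧ (l, a) ∈ (m.child ⟨b₀, hb⟩).val := by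
  constructor
  · intro hmem
    have ha₀ : a₀ = m.root := eq_root_of_mem (m.2.2.2.2 [] a₀ b₀ l a hmem)
    have hb₀ : f b₀ = a₀ := m.2.1 _ hmem (a₀, b₀) List.mem_cons_self
    subst ha₀
    exact ⟨hb₀, rfl, hmem⟩
  · rintro ⟨_, rfl, hmem⟩
    exact hmem

end MTy

def IsRun {X : Type*} (v : X → Σ a : A, ({b : B // f b = a} → X)) :
    X → List (A × B) → A → Prop
  | x, [], a => a = (v x).1
  | x, (a₀, b₀) :: l, a => ∃ hb : f b₀ = (v x).1, a₀ = (v x).1 ∧ IsRun v ((v x).2 ⟨b₀, hb⟩) l a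

section IsRun

variable {X : Type*} (v : X → Σ a : A, ({b : B // f b = a} → X))

theorem IsRun.valid {x : X} {l : List (A × B)} {a : A} (h : IsRun v x l a) :
    ∀ q ∈ l, f q.2 = q.1 := by
  induction l generalizing x with
  | nil => simp
  | cons q l ih =>
    obtain ⟨a₀, b₀⟩ := q
    obtain ⟨hb, ha, hrest⟩ := h
    rintro q' hq'
    rcases List.mem_cons.1 hq' with rfl | hq'
    · exact hb.trans ha.symm
    · exact ih hrest q' hq'

theorem IsRun.existsUnique_snoc {x : X} {l : List (A × B)} {aₙ : A} (h : IsRun v x l aₙ)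
    {b : B} (hb : f b = aₙ) : ∃! a : A, IsRun v x (l ++ [(aₙ, b)]) a := by
  induction l generalizing x with
  | nil =>
    obtain rfl : aₙ = (v x).1 := h
    exact ⟨_, ⟨hb, rfl, rfl⟩, fun _ ⟨_, _, hy⟩ => hy⟩
  | cons q l ih =>
    obtain ⟨hb₀, hq, hrest⟩ := h
    obtain ⟨a, ha, hau⟩ := ih hrest
    exact ⟨a, ⟨hb₀, hq, ha⟩, fun y ⟨_, _, hy⟩ => hau y hy⟩

theorem IsRun.of_append_cons {x : X} {l₁ l₂ : List (A × B)} {a' a : A} {b' : B}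
    (h : IsRun v x (l₁ ++ (a', b') :: l₂) a) : IsRun v x l₁ a' := by
  induction l₁ generalizing x with
  | nil => exact h.2.1
  | cons q l₁ ih =>
    obtain ⟨hb₀, hq, hrest⟩ := h
    exact ⟨hb₀, hq, ih hrest⟩

theorem isMTree_isRun (x : X) : IsMTree f {σ | IsRun v x σ.1 σ.2} :=
  ⟨fun _ hp => hp.valid v, ⟨(v x).1, rfl, fun _ hy => hy⟩,
    fun _ _ hl _ hb => hl.existsUnique_snoc v hb,
    fun _ _ _ _ _ hmem => hmem.of_append_cons v⟩

theorem isRun_comp_iff {Y : Type*} {w : Y → Σ a : A, ({b : B // f b = a} → Y)} {g : X → Y}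
    (hg : ∀ x, w (g x) = ⟨(v x).1, fun b => g ((v x).2 b)⟩) (x : X) (l : List (A × B))
    (a : A) : IsRun w (g x) l a ↔ IsRun v x l a := by
  induction l generalizing x with
  | nil => simp only [IsRun, hg x]
  | cons q l ih =>
    simp only [IsRun]
    rw [hg x]
    exact exists_congr fun _ => and_congr_right fun _ => ih _

end IsRun

namespace MTy

theorem mem_iff_isRun_dest (m : MTy f) (l : List (A × B)) (a : A) :
    (l, a) ∈ m.val ↔ IsRun dest m l a := by
  induction l generalizing m with
  | nil => exact ⟨eq_root_of_mem, fun h => h ▸ m.root_mem⟩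
  | cons q l ih =>
    rw [mem_cons_iff]
    exact exists_congr fun _ => and_congr_right fun _ => ih _

variable {X : Type*} (v : X → Σ a : A, ({b : B // f b = a} → X))

def corec (x : X) : MTy f := ⟨{σ | IsRun v x σ.1 σ.2}, isMTree_isRun v x⟩

theorem root_corec (x : X) : (corec v x).root = (v x).1 :=
  (eq_root_of_mem (m := corec v x) rfl).symm

theorem dest_corec (x : X) : dest (corec v x) = ⟨(v x).1, fun b => corec v ((v x).2 b)⟩ := by
  refine Sigma.mk_eq_mk_of_subtype_fun (root_corec v x) fun b hb => ?_
  apply Subtype.ext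
  ext σ
  exact ⟨fun ⟨_, _, h⟩ => h, fun h => ⟨hb.trans (root_corec v x), root_corec v x, h⟩⟩

theorem eq_corec {h : X → MTy f} (hh : ∀ x, dest (h x) = ⟨(v x).1, fun b => h ((v x).2 b)⟩)
    (x : X) : h x = corec v x :=
  Subtype.ext <| Set.ext fun ⟨l, a⟩ =>
    ((h x).mem_iff_isRun_dest l a).trans (isRun_comp_iff v hh x l a)

end MTy

/-- `MTy f` carries a canonical `P_f`-coalgebra structure (root labelling and
subtree extraction) and is the final `P_f`-coalgebra, where `P_f X = Σ a : A, (f⁻¹(a) → X)`. -/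
theorem MTy_is_final_coalgebra (A B : Type) (f : B → A) :
    ∃ u : MTy f → Σ a : A, ({b : B // f b = a} → MTy f),
      (∀ m : MTy f,
        (([], (u m).1) ∈ m.val) ∧
        ∀ b : {b : B // f b = (u m).1},
          ((u m).2 b).val = {σ : List (A × B) × A |
            (((u m).1, b.val) :: σ.1, σ.2) ∈ m.val}) ∧
      (∀ (X : Type) (v : X → Σ a : A, ({b : B // f b = a} → X)),
        ∃! h : X → MTy f,
          ∀ x : X, u (h x) = ⟨(v x).1, fun b => h ((v x).2 b)⟩) :=
  ⟨MTy.dest, fun m => ⟨m.root_mem, fun _ => rfl⟩, fun _ v =>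
    ⟨MTy.corec v, MTy.dest_corec v, fun _ hh => funext (MTy.eq_corec v hh)⟩⟩
end

section
/- Let f : B → A be a function with final P_f-coalgebra u : M → P_f(M) with inverse sup. The least subset of M closed under the deterministic rules ({t(b) : b ∈ f⁻¹(a)}, {sup(a,t)}) for all a ∈ A and t : f⁻¹(a) → M, equipped with the restricted algebra structure, is an initial P_f-algebra (the W-type of f). -/
/-!
Folding a well-founded tree with `sup` maps the W-type of `f` onto the least `sup`-closed subset
of `M`, and this map is injective because `sup` is (it has the left inverse `u`). So the least
`sup`-closed subset, with `sup` restricted to it, is isomorphic as an algebra to the W-type, which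
is the initial algebra by structural recursion.
-/

/-- The least subset of `M` closed under the deterministic rules
`({t(b) : b ∈ f⁻¹(a)}, {sup(a,t)})`: an element lies in it iff it lies in every
subset closed under all these rules. -/
def leastSupClosed {A B M : Type*} (f : B → A)
    (sup : (Σ a : A, ({b : B // f b = a} → M)) → M) : Set M :=
  {m | ∀ Y : Set M,
    (∀ (a : A) (t : {b : B // f b = a} → M), (∀ b, t b ∈ Y) → sup ⟨a, t⟩ ∈ Y) →
    m ∈ Y}

theorem WType.eq_elim {α : Type*} {β : α → Type*} {γ : Type*} (s : (Σ a : α, β a → γ) → γ)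
    (g : WType β → γ) (hg : ∀ a t, g ⟨a, t⟩ = s ⟨a, g ∘ t⟩) : g = WType.elim γ s := by
  funext w
  induction w with
  | mk a t ih => rw [hg, WType.elim]; exact congrArg (fun t' => s ⟨a, t'⟩) (funext ih)

namespace LeastSupClosed

variable {A B M : Type*} {f : B → A} {sup : (Σ a : A, ({b : B // f b = a} → M)) → M}

abbrev W (f : B → A) := WType fun a : A => {b : B // f b = a}

theorem sup_mem {a : A} {t : {b : B // f b = a} → M} (ht : ∀ b, t b ∈ leastSupClosed f sup) :
    sup ⟨a, t⟩ ∈ leastSupClosed f sup :=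
  fun Y hY => hY a t fun b => ht b Y hY

theorem elim_mem (w : W f) : WType.elim M sup w ∈ leastSupClosed f sup := by
  induction w with
  | mk a t ih => exact sup_mem ih

theorem range_elim : Set.range (WType.elim M sup : W f → M) = leastSupClosed f sup := by
  refine Set.Subset.antisymm (Set.range_subset_iff.2 elim_mem) fun m hm => hm _ ?_
  intro a t ht
  choose w hw using ht
  exact ⟨⟨a, w⟩, by simp only [WType.elim, hw]⟩

noncomputable def equivW (hsup : Function.Injective sup) : W f ≃ leastSupClosed f sup :=
  (Equiv.ofInjective _ (WType.elim_injective M sup hsup)).trans (Equiv.setCongr range_elim)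

@[simp]
theorem coe_equivW (hsup : Function.Injective sup) (w : W f) :
    (equivW hsup w : M) = WType.elim M sup w :=
  rfl

def IsAlgHom {X : Type*} (s : (Σ a : A, ({b : B // f b = a} → X)) → X)
    (h : leastSupClosed f sup → X) : Prop :=
  ∀ (a : A) (t : {b : B // f b = a} → M) (ht : ∀ b, t b ∈ leastSupClosed f sup)
    (hs : sup ⟨a, t⟩ ∈ leastSupClosed f sup), h ⟨sup ⟨a, t⟩, hs⟩ = s ⟨a, fun b => h ⟨t b, ht b⟩⟩

theorem isAlgHom_iff {X : Type*} (hsup : Function.Injective sup)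
    (s : (Σ a : A, ({b : B // f b = a} → X)) → X) (h : leastSupClosed f sup → X) :
    IsAlgHom s h ↔ ∀ a t, h (equivW hsup ⟨a, t⟩) = s ⟨a, h ∘ equivW hsup ∘ t⟩ := by
  constructor
  · intro hh a t
    exact hh a _ (fun b => elim_mem (t b)) _
  · intro hh a t ht hs
    choose w hw using fun b => (equivW hsup).surjective ⟨t b, ht b⟩
    have hmk : equivW hsup ⟨a, w⟩ = ⟨sup ⟨a, t⟩, hs⟩ := by
      ext
      simp only [coe_equivW, WType.elim]
      exact congrArg (fun t' => sup ⟨a, t'⟩) (funext fun b => congrArg Subtype.val (hw b))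
    rw [← hmk, hh]
    exact congrArg (fun t' => s ⟨a, t'⟩) (funext fun b => congrArg h (hw b))

theorem existsUnique_isAlgHom {X : Type*} (hsup : Function.Injective sup)
    (s : (Σ a : A, ({b : B // f b = a} → X)) → X) :
    ∃! h : leastSupClosed f sup → X, IsAlgHom s h := by
  refine ⟨WType.elim X s ∘ (equivW hsup).symm, ?_, fun g hg => ?_⟩
  · refine (isAlgHom_iff hsup s _).2 fun a t => ?_
    simp only [Function.comp_def, Equiv.symm_apply_apply, WType.elim]
  · have hgW := WType.eq_elim s (g ∘ equivW hsup) ((isAlgHom_iff hsup s g).1 hg)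
    rw [← hgW]
    funext m
    simp

end LeastSupClosed

open LeastSupClosed in
theorem leastSupClosed_is_initial_algebra_general (A B : Type) (f : B → A) (M : Type)
    (u : M → Σ a : A, ({b : B // f b = a} → M))
    (sup : (Σ a : A, ({b : B // f b = a} → M)) → M)
    (hsup₂ : ∀ y, u (sup y) = y) :
    (∀ (a : A) (t : {b : B // f b = a} → M),
      (∀ b, t b ∈ leastSupClosed f sup) → sup ⟨a, t⟩ ∈ leastSupClosed f sup) ∧
    (∀ (X : Type) (s : (Σ a : A, ({b : B // f b = a} → X)) → X),
      ∃! h : (leastSupClosed f sup) → X,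
        ∀ (a : A) (t : {b : B // f b = a} → M)
          (ht : ∀ b, t b ∈ leastSupClosed f sup)
          (hs : sup ⟨a, t⟩ ∈ leastSupClosed f sup),
          h ⟨sup ⟨a, t⟩, hs⟩ = s ⟨a, fun b => h ⟨t b, ht b⟩⟩) :=
  ⟨fun _ _ => sup_mem, fun _ s =>
    existsUnique_isAlgHom (Function.LeftInverse.injective hsup₂) s⟩

/-- if `u : M → P_f(M)` is a final `P_f`-coalgebra with inverse `sup`
(Lambek), then the least subset of `M` closed under the rules
`({t(b) : b ∈ f⁻¹(a)}, {sup(a,t)})`, with the restricted algebra structure, is an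
initial `P_f`-algebra (the W-type of `f`). -/
theorem leastSupClosed_is_initial_algebra (A B : Type) (f : B → A) (M : Type)
    (u : M → Σ a : A, ({b : B // f b = a} → M))
    (hfinal : ∀ (X : Type) (v : X → Σ a : A, ({b : B // f b = a} → X)),
      ∃! h : X → M, ∀ x : X, u (h x) = ⟨(v x).1, fun b => h ((v x).2 b)⟩)
    (sup : (Σ a : A, ({b : B // f b = a} → M)) → M)
    (hsup₁ : ∀ m : M, sup (u m) = m)
    (hsup₂ : ∀ y, u (sup y) = y) :
    (∀ (a : A) (t : {b : B // f b = a} → M),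
      (∀ b, t b ∈ leastSupClosed f sup) → sup ⟨a, t⟩ ∈ leastSupClosed f sup) ∧
    (∀ (X : Type) (s : (Σ a : A, ({b : B // f b = a} → X)) → X),
      ∃! h : (leastSupClosed f sup) → X,
        ∀ (a : A) (t : {b : B // f b = a} → M)
          (ht : ∀ b, t b ∈ leastSupClosed f sup)
          (hs : sup ⟨a, t⟩ ∈ leastSupClosed f sup),
          h ⟨sup ⟨a, t⟩, hs⟩ = s ⟨a, fun b => h ⟨t b, ht b⟩⟩) :=
  leastSupClosed_is_initial_algebra_general A B f M u sup hsup₂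
end

section
/- Let T be a game theory over a set of propositional letters P, and let S be the set of subformulae occurring in T together with P. Define a set of rules on S comprising: ({⋀ᵢφᵢ},{φ_{i₀}}) for each conjunction in S and i₀ ∈ I; ({⋁ᵢφᵢ},{φᵢ : i ∈ I}) for each disjunction in S; ({φᵢ : i∈I},{⋀ᵢφᵢ}) for each conjunction in S; ({φ_{i₀}},{⋁ᵢφᵢ}) for each disjunction in S and i₀ ∈ I; and ({φ},{ψ}) for each sequent φ→ψ ∈ T. Then: (a) if M ⊆ P is a model of T, the set {φ ∈ S : M ⊨ φ} is closed under these rules; (b) conversely, if X ⊆ S is closed, then M = X ∩ P is a model of T, and for all φ ∈ S, φ ∈ X iff M ⊨ φ. -/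
/-- Game formulae over a set of propositional letters `P`: letters, set-indexed
conjunctions and set-indexed disjunctions. -/
inductive GameFormula (P : Type) : Type 1
  | letter : P → GameFormula P
  | conj : (I : Type) → (I → GameFormula P) → GameFormula P
  | disj : (I : Type) → (I → GameFormula P) → GameFormula P

/-- Satisfaction of a game formula in a model `M ⊆ P`. -/
def Sat {P : Type} (M : Set P) : GameFormula P → Prop
  | .letter p => p ∈ M
  | .conj _ φ => ∀ i, Sat M (φ i)
  | .disj _ φ => ∃ i, Sat M (φ i)

/-- `Subformula φ ψ`: `φ` is a subformula of `ψ`. -/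
inductive Subformula {P : Type} : GameFormula P → GameFormula P → Prop
  | refl (φ : GameFormula P) : Subformula φ φ
  | conj {I : Type} {φ : I → GameFormula P} {ψ : GameFormula P} (i : I) :
      Subformula ψ (φ i) → Subformula ψ (.conj I φ)
  | disj {I : Type} {φ : I → GameFormula P} {ψ : GameFormula P} (i : I) :
      Subformula ψ (φ i) → Subformula ψ (.disj I φ)

/-- `S`: the letters of `P` together with the subformulae of the theory `T`. -/
def subSet {P : Type} (T : Set (GameFormula P × GameFormula P)) : Set (GameFormula P) :=
  {φ | ∃ p : P, φ = .letter p} ∪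
  {φ | ∃ s ∈ T, Subformula φ s.1 ∨ Subformula φ s.2}

/-- The rules on `S` associated to a game theory `T`: conjunction elimination and
introduction, disjunction elimination and introduction, and the sequents of `T`. -/
def gameRules {P : Type} (T : Set (GameFormula P × GameFormula P)) :
    Set (Set (GameFormula P) × Set (GameFormula P)) :=
  {r | ∃ (I : Type) (φ : I → GameFormula P), GameFormula.conj I φ ∈ subSet T ∧
        ∃ i₀ : I, r = ({GameFormula.conj I φ}, {φ i₀})} ∪
  {r | ∃ (I : Type) (φ : I → GameFormula P), GameFormula.disj I φ ∈ subSet T ∧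
        r = ({GameFormula.disj I φ}, Set.range φ)} ∪
  {r | ∃ (I : Type) (φ : I → GameFormula P), GameFormula.conj I φ ∈ subSet T ∧
        r = (Set.range φ, {GameFormula.conj I φ})} ∪
  {r | ∃ (I : Type) (φ : I → GameFormula P), GameFormula.disj I φ ∈ subSet T ∧
        ∃ i₀ : I, r = ({φ i₀}, {GameFormula.disj I φ})} ∪
  {r | ∃ s ∈ T, r = ({s.1}, {s.2})}

/-!
Each connective contributes an elimination and an introduction rule that together say exactly
what its satisfaction clause says, so, by induction on formulae of `S`, membership in a closed
set agrees with satisfaction by the letters it contains; the sequent rules then make those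
letters a model.
-/

theorem Subformula.trans {P : Type} {a b c : GameFormula P}
    (hab : Subformula a b) (hbc : Subformula b c) : Subformula a c := by
  induction hbc with
  | refl => exact hab
  | conj i _ ih => exact .conj i (ih hab)
  | disj i _ ih => exact .disj i (ih hab)

namespace IsClosedUnder

variable {X : Type*} {R : Set (Set X × Set X)} {Y : Set X}

theorem mem_of_rule (hY : IsClosedUnder R Y) {s : Set X} {b : X} (hr : (s, {b}) ∈ R)
    (hs : s ⊆ Y) : b ∈ Y := by
  obtain ⟨_, rfl, hb⟩ := hY _ hr hs
  exact hb

theorem exists_mem_of_rule (hY : IsClosedUnder R Y) {a : X} {t : Set X} (hr : ({a}, t) ∈ R)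
    (ha : a ∈ Y) : ∃ b ∈ t, b ∈ Y :=
  hY _ hr (Set.singleton_subset_iff.mpr ha)

end IsClosedUnder

section GameRules

variable {P : Type} {T : Set (GameFormula P × GameFormula P)}

theorem subSet_of_subformula {φ ψ : GameFormula P} (hφ : φ ∈ subSet T)
    (hψ : Subformula ψ φ) : ψ ∈ subSet T := by
  rcases hφ with ⟨p, rfl⟩ | ⟨s, hs, hφs⟩
  · cases hψ
    exact .inl ⟨p, rfl⟩
  · exact .inr ⟨s, hs, hφs.imp hψ.trans hψ.trans⟩

theorem fst_mem_subSet {s : GameFormula P × GameFormula P} (hs : s ∈ T) : s.1 ∈ subSet T :=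
  .inr ⟨s, hs, .inl (.refl _)⟩

theorem snd_mem_subSet {s : GameFormula P × GameFormula P} (hs : s ∈ T) : s.2 ∈ subSet T :=
  .inr ⟨s, hs, .inr (.refl _)⟩

theorem conj_arg_mem_subSet {I : Type} {φ : I → GameFormula P}
    (h : .conj I φ ∈ subSet T) (i : I) : φ i ∈ subSet T :=
  subSet_of_subformula h (.conj i (.refl _))

theorem disj_arg_mem_subSet {I : Type} {φ : I → GameFormula P}
    (h : .disj I φ ∈ subSet T) (i : I) : φ i ∈ subSet T :=
  subSet_of_subformula h (.disj i (.refl _))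

theorem conj_elim_mem_gameRules {I : Type} {φ : I → GameFormula P}
    (h : .conj I φ ∈ subSet T) (i : I) : ({.conj I φ}, {φ i}) ∈ gameRules T :=
  .inl <| .inl <| .inl <| .inl ⟨I, φ, h, i, rfl⟩

theorem disj_elim_mem_gameRules {I : Type} {φ : I → GameFormula P}
    (h : .disj I φ ∈ subSet T) : ({.disj I φ}, Set.range φ) ∈ gameRules T :=
  .inl <| .inl <| .inl <| .inr ⟨I, φ, h, rfl⟩

theorem conj_intro_mem_gameRules {I : Type} {φ : I → GameFormula P}
    (h : .conj I φ ∈ subSet T) : (Set.range φ, {.conj I φ}) ∈ gameRules T :=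
  .inl <| .inl <| .inr ⟨I, φ, h, rfl⟩

theorem disj_intro_mem_gameRules {I : Type} {φ : I → GameFormula P}
    (h : .disj I φ ∈ subSet T) (i : I) : ({φ i}, {.disj I φ}) ∈ gameRules T :=
  .inl <| .inr ⟨I, φ, h, i, rfl⟩

theorem sequent_mem_gameRules {s : GameFormula P × GameFormula P} (hs : s ∈ T) :
    ({s.1}, {s.2}) ∈ gameRules T :=
  .inr ⟨s, hs, rfl⟩

theorem isClosedUnder_gameRules_of_model {M : Set P} (hM : ∀ s ∈ T, Sat M s.1 → Sat M s.2) :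
    IsClosedUnder (gameRules T) {φ | φ ∈ subSet T ∧ Sat M φ} := by
  intro r hr hprem
  have hsingle : ∀ {ψ}, r.1 = {ψ} → ψ ∈ subSet T ∧ Sat M ψ := fun h =>
    hprem (h ▸ Set.mem_singleton _)
  rcases hr with ((((⟨I, φ, hS, i, rfl⟩ | ⟨I, φ, hS, rfl⟩) | ⟨I, φ, hS, rfl⟩) |
      ⟨I, φ, hS, i, rfl⟩) | ⟨s, hs, rfl⟩)
  · exact ⟨φ i, rfl, conj_arg_mem_subSet hS i, (hsingle rfl).2 i⟩
  · obtain ⟨i, hi⟩ := (hsingle rfl).2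
    exact ⟨φ i, ⟨i, rfl⟩, disj_arg_mem_subSet hS i, hi⟩
  · exact ⟨_, rfl, hS, fun i => (hprem ⟨i, rfl⟩).2⟩
  · exact ⟨_, rfl, hS, i, (hsingle rfl).2⟩
  · exact ⟨s.2, rfl, snd_mem_subSet hs, hM s hs (hsingle rfl).2⟩

theorem mem_iff_sat_of_isClosedUnder {X : Set (GameFormula P)}
    (hX : IsClosedUnder (gameRules T) X) :
    ∀ φ ∈ subSet T, (φ ∈ X ↔ Sat {p : P | GameFormula.letter p ∈ X} φ)
  | .letter _, _ => Iff.rfl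
  | .conj I φ, hS => by
    have ih i := mem_iff_sat_of_isClosedUnder hX (φ i) (conj_arg_mem_subSet hS i)
    refine ⟨fun h i => (ih i).1 ?_, fun h => hX.mem_of_rule (conj_intro_mem_gameRules hS) ?_⟩
    · exact hX.mem_of_rule (conj_elim_mem_gameRules hS i) (Set.singleton_subset_iff.mpr h)
    · rintro _ ⟨i, rfl⟩
      exact (ih i).2 (h i)
  | .disj I φ, hS => by
    have ih i := mem_iff_sat_of_isClosedUnder hX (φ i) (disj_arg_mem_subSet hS i)
    refine ⟨fun h => ?_, fun ⟨i, hi⟩ => ?_⟩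
    · obtain ⟨_, ⟨i, rfl⟩, hi⟩ := hX.exists_mem_of_rule (disj_elim_mem_gameRules hS) h
      exact ⟨i, (ih i).1 hi⟩
    · exact hX.mem_of_rule (disj_intro_mem_gameRules hS i)
        (Set.singleton_subset_iff.mpr ((ih i).2 hi))

theorem model_of_isClosedUnder {X : Set (GameFormula P)}
    (hX : IsClosedUnder (gameRules T) X) :
    ∀ s ∈ T, Sat {p : P | GameFormula.letter p ∈ X} s.1 →
      Sat {p : P | GameFormula.letter p ∈ X} s.2 := by
  intro s hs h
  rw [← mem_iff_sat_of_isClosedUnder hX _ (snd_mem_subSet hs)]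
  rw [← mem_iff_sat_of_isClosedUnder hX _ (fst_mem_subSet hs)] at h
  exact hX.mem_of_rule (sequent_mem_gameRules hs) (Set.singleton_subset_iff.mpr h)

end GameRules

/-- (a) if `M ⊆ P` is a model of `T`, then `{φ ∈ S : M ⊨ φ}` is closed
under the rules; (b) conversely, if `X ⊆ S` is closed, then `M = X ∩ P` is a model of
`T` and for all `φ ∈ S`, `φ ∈ X` iff `M ⊨ φ`. -/
theorem gameRules_closed_iff_model (P : Type)
    (T : Set (GameFormula P × GameFormula P)) :
    (∀ M : Set P, (∀ s ∈ T, Sat M s.1 → Sat M s.2) →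
      IsClosedUnder (gameRules T) {φ | φ ∈ subSet T ∧ Sat M φ}) ∧
    (∀ X : Set (GameFormula P), X ⊆ subSet T → IsClosedUnder (gameRules T) X →
      ((∀ s ∈ T, Sat {p : P | GameFormula.letter p ∈ X} s.1 →
          Sat {p : P | GameFormula.letter p ∈ X} s.2) ∧
        ∀ φ ∈ subSet T, (φ ∈ X ↔ Sat {p : P | GameFormula.letter p ∈ X} φ))) :=
  ⟨fun _ hM => isClosedUnder_gameRules_of_model hM,
    fun _ _ hX => ⟨model_of_isClosedUnder hX, mem_iff_sat_of_isClosedUnder hX⟩⟩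
end

section
/- Let (ℙ, Cov) be a formal space with set presentation BCov. A subset α ⊆ ℙ is a point of the formal space if and only if α is inhabited and closed under the finitary rules: ({p},{q}) for p ≤ q; ({p,q}, {r ∈ ℙ : r ≤ p and r ≤ q}) for all p,q ∈ ℙ; and ({p}, ↓S) for each S ∈ BCov(p), where ↓S = {r : ∃s ∈ S, r ≤ s}. Hence finitary NID implies the class of points of a set-presented formal space is set-generated. -/
/-- A point of a formal space `(ℙ, Cov)`: an inhabited, upward closed, downward
directed subset splitting every cover of each of its elements. -/
def IsPoint {P : Type*} [Preorder P] (Cov : P → Set (Set P)) (α : Set P) : Prop :=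
  α.Nonempty ∧
  (∀ a ∈ α, ∀ b, a ≤ b → b ∈ α) ∧
  (∀ a ∈ α, ∀ b ∈ α, ∃ c ∈ α, c ≤ a ∧ c ≤ b) ∧
  (∀ a ∈ α, ∀ S ∈ Cov a, (S ∩ α).Nonempty)

/-- The finitary rules associated to a presentation `BCov`:
`({p},{q})` for `p ≤ q`; `({p,q}, {r : r ≤ p ∧ r ≤ q})`; and `({p}, ↓S)` for
`S ∈ BCov(p)`. -/
def pointRules {P : Type*} [Preorder P] (BCov : P → Set (Set P)) :
    Set (Set P × Set P) :=
  {r | ∃ p q : P, p ≤ q ∧ r = ({p}, {q})} ∪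
  {r | ∃ p q : P, r = ({p, q}, {x : P | x ≤ p ∧ x ≤ q})} ∪
  {r | ∃ (p : P) (S : Set P), S ∈ BCov p ∧
        r = ({p}, {x : P | ∃ s ∈ S, x ≤ s})}

/-!
Each family of rules in `pointRules BCov` expresses one clause of the definition of a point:
the rules `({p},{q})` say upward closure, the rules `({p,q}, ↓p ∩ ↓q)` say downward
directedness, and the rules `({p}, ↓S)` say that basic covers are split. Since the presentation
lets basic covers replace all covers for such sets, points are exactly the inhabited sets closed
under these rules. All premises are finite, so finitary NID yields a generating set of closed
sets, and its inhabited members generate the points.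
-/

theorem isClosedUnder_union {X : Type*} (R₁ R₂ : Set (Set X × Set X)) (Y : Set X) :
    IsClosedUnder (R₁ ∪ R₂) Y ↔ IsClosedUnder R₁ Y ∧ IsClosedUnder R₂ Y := by
  simp only [IsClosedUnder, Set.mem_union, or_imp, forall_and]

section PointRules

variable {P : Type*} [Preorder P]

theorem isClosedUnder_monotoneRules_iff (α : Set P) :
    IsClosedUnder {r | ∃ p q : P, p ≤ q ∧ r = ({p}, {q})} α ↔
      ∀ a ∈ α, ∀ b, a ≤ b → b ∈ α := by
  constructor
  · intro h a ha b hab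
    obtain ⟨_, rfl, hb⟩ := h _ ⟨a, b, hab, rfl⟩ (Set.singleton_subset_iff.2 ha)
    exact hb
  · rintro h _ ⟨p, q, hpq, rfl⟩ hp
    exact ⟨q, rfl, h p (Set.singleton_subset_iff.1 hp) q hpq⟩

theorem isClosedUnder_meetRules_iff (α : Set P) :
    IsClosedUnder {r | ∃ p q : P, r = ({p, q}, {x : P | x ≤ p ∧ x ≤ q})} α ↔
      ∀ a ∈ α, ∀ b ∈ α, ∃ c ∈ α, c ≤ a ∧ c ≤ b := by
  constructor
  · intro h a ha b hb
    obtain ⟨c, ⟨hca, hcb⟩, hc⟩ := h _ ⟨a, b, rfl⟩ (Set.pair_subset ha hb)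
    exact ⟨c, hc, hca, hcb⟩
  · rintro h _ ⟨p, q, rfl⟩ hpq
    obtain ⟨c, hc, hcp, hcq⟩ := h p (hpq (.inl rfl)) q (hpq (.inr rfl))
    exact ⟨c, ⟨hcp, hcq⟩, hc⟩

theorem isClosedUnder_coverRules_iff (BCov : P → Set (Set P)) (α : Set P) :
    IsClosedUnder {r | ∃ (p : P) (S : Set P), S ∈ BCov p ∧
        r = ({p}, {x : P | ∃ s ∈ S, x ≤ s})} α ↔
      ∀ a ∈ α, ∀ S ∈ BCov a, ({x : P | ∃ s ∈ S, x ≤ s} ∩ α).Nonempty := by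
  constructor
  · intro h a ha S hS
    exact h _ ⟨a, S, hS, rfl⟩ (Set.singleton_subset_iff.2 ha)
  · rintro h _ ⟨p, S, hS, rfl⟩ hp
    exact h p (Set.singleton_subset_iff.1 hp) S hS

theorem isClosedUnder_pointRules_iff (BCov : P → Set (Set P)) (α : Set P) :
    IsClosedUnder (pointRules BCov) α ↔
      (∀ a ∈ α, ∀ b, a ≤ b → b ∈ α) ∧
      (∀ a ∈ α, ∀ b ∈ α, ∃ c ∈ α, c ≤ a ∧ c ≤ b) ∧
      (∀ a ∈ α, ∀ S ∈ BCov a, ({x : P | ∃ s ∈ S, x ≤ s} ∩ α).Nonempty) := by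
  rw [pointRules, isClosedUnder_union, isClosedUnder_union, isClosedUnder_monotoneRules_iff,
    isClosedUnder_meetRules_iff, isClosedUnder_coverRules_iff, and_assoc]

theorem finite_of_mem_pointRules (BCov : P → Set (Set P)) :
    ∀ r ∈ pointRules BCov, r.1.Finite := by
  rintro _ ((⟨p, _, _, rfl⟩ | ⟨p, q, rfl⟩) | ⟨p, _, _, rfl⟩)
  · exact Set.finite_singleton p
  · exact (Set.finite_singleton q).insert p
  · exact Set.finite_singleton p

/-- `BCov` presents `Cov` as far as points are concerned. -/
def PresentsPoints (Cov BCov : P → Set (Set P)) : Prop :=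
  ∀ α : Set P, α.Nonempty →
    (∀ a ∈ α, ∀ b, a ≤ b → b ∈ α) →
    (∀ a ∈ α, ∀ b ∈ α, ∃ c ∈ α, c ≤ a ∧ c ≤ b) →
    ((∀ a ∈ α, ∀ S ∈ Cov a, (S ∩ α).Nonempty) ↔
      (∀ a ∈ α, ∀ S ∈ BCov a, ({x : P | ∃ s ∈ S, x ≤ s} ∩ α).Nonempty))

theorem isPoint_iff_nonempty_and_isClosedUnder_pointRules {Cov BCov : P → Set (Set P)}
    (hpres : PresentsPoints Cov BCov) (α : Set P) :
    IsPoint Cov α ↔ α.Nonempty ∧ IsClosedUnder (pointRules BCov) α := by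
  rw [isClosedUnder_pointRules_iff]
  constructor
  · rintro ⟨hne, hup, hdir, hcov⟩
    exact ⟨hne, hup, hdir, (hpres α hne hup hdir).1 hcov⟩
  · rintro ⟨hne, hup, hdir, hbcov⟩
    exact ⟨hne, hup, hdir, (hpres α hne hup hdir).2 hbcov⟩

end PointRules

theorem SetGenerated.sep_nonempty {X : Type*} {M : Set (Set X)} (hM : SetGenerated M) :
    SetGenerated {α ∈ M | α.Nonempty} := by
  obtain ⟨G, hGM, hgen⟩ := hM
  refine ⟨{β ∈ G | β.Nonempty}, fun β hβ => ⟨hGM hβ.1, hβ.2⟩, ?_⟩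
  intro α hα x hx
  obtain ⟨β, hβG, hxβ, hβα⟩ := hgen α hα.1 x hx
  exact ⟨β, ⟨hβG, x, hxβ⟩, hxβ, hβα⟩

/-- `α` is a point iff `α` is inhabited and closed under the finitary
rules `pointRules BCov`; hence finitary NID implies that the class of points of a
set-presented formal space is set-generated. -/
theorem point_iff_closed_and_finNID_setGenerated (P : Type) [Preorder P]
    (Cov BCov : P → Set (Set P))
    (hpres : ∀ α : Set P, α.Nonempty →
      (∀ a ∈ α, ∀ b, a ≤ b → b ∈ α) →
      (∀ a ∈ α, ∀ b ∈ α, ∃ c ∈ α, c ≤ a ∧ c ≤ b) →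
      ((∀ a ∈ α, ∀ S ∈ Cov a, (S ∩ α).Nonempty) ↔
        (∀ a ∈ α, ∀ S ∈ BCov a, ({x : P | ∃ s ∈ S, x ≤ s} ∩ α).Nonempty))) :
    (∀ α : Set P, IsPoint Cov α ↔
      (α.Nonempty ∧ IsClosedUnder (pointRules BCov) α)) ∧
    ((∀ (X : Type) (R : Set (Set X × Set X)), (∀ r ∈ R, r.1.Finite) →
        SetGenerated {Y : Set X | IsClosedUnder R Y}) →
      SetGenerated {α : Set P | IsPoint Cov α}) := by
  have hpoint := isPoint_iff_nonempty_and_isClosedUnder_pointRules hpres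
  refine ⟨hpoint, fun hNID => ?_⟩
  have hpoints : {α : Set P | IsPoint Cov α} =
      {α ∈ {Y : Set P | IsClosedUnder (pointRules BCov) Y} | α.Nonempty} := by
    ext α
    exact (hpoint α).trans and_comm
  rw [hpoints]
  exact (hNID P _ (finite_of_mem_pointRules BCov)).sep_nonempty
end

section
/- If every point of a set-presented formal space is minimal with respect to inclusion (the space is flat), and the class of points is set-generated, then the class of points is a set; in particular finitary NID implies that flat, set-presented formal spaces have a set of points. -/
theorem eq_of_forall_minimal_of_forall_exists_subset {X : Type*} {S G : Set (Set X)}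
    (hmin : ∀ α ∈ S, ∀ β ∈ S, β ⊆ α → β = α) (hGS : G ⊆ S)
    (hcofinal : ∀ α ∈ S, ∃ β ∈ G, β ⊆ α) : S = G := by
  refine hGS.antisymm' fun α hα => ?_
  obtain ⟨β, hβG, hβα⟩ := hcofinal α hα
  rwa [← hmin α hα β (hGS hβG) hβα]

/-- if all points of a formal space are minimal with respect to inclusion
(the space is flat) and the class of points is set-generated by `G`, then the class of
points coincides with the set `G`; in particular it is a set. -/
theorem flat_points_form_a_set (P : Type) [Preorder P]
    (Cov : P → Set (Set P))
    (hflat : ∀ α β : Set P, IsPoint Cov α → IsPoint Cov β → β ⊆ α → β = α)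
    (G : Set (Set P))
    (hG : G ⊆ {α : Set P | IsPoint Cov α})
    (hgen : ∀ α : Set P, IsPoint Cov α → ∀ a ∈ α, ∃ β ∈ G, a ∈ β ∧ β ⊆ α) :
    {α : Set P | IsPoint Cov α} = G := by
  refine eq_of_forall_minimal_of_forall_exists_subset
    (fun α hα β hβ => hflat α β hα hβ) hG fun α hα => ?_
  obtain ⟨a, ha⟩ := hα.1
  obtain ⟨β, hβG, -, hβα⟩ := hgen α hα a ha
  exact ⟨β, hβG, hβα⟩
end
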